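/- Alternative formulation of the relativistic Euler equations (Proposition 2.1): Let ρ > 0 and u¹,u²,u³ be C¹ functions on an open subset of [1,∞)×ℝ³, with u⁰, u_a, Π^{μν}, L as in the context. Then the coordinate form of the relativistic Euler equations with equation of state p = c²ρ relative to g, namely u^α∂_α ln ρ + (1+c²)∂_α u^α + 3(1+c²)ω u⁰ = 0 and u^α∂_α u^j + 2ω u⁰u^j + (c²/(1+c²))Π^{jα}∂_α ln ρ = 0 (j=1,2,3) — these are u^αD_α ln ρ + (1+c²)D_α u^α = 0 and u^αD_α u^j + (c²/(1+c²))Π^{jα}D_α ln ρ = 0 with the Levi-Civita connection D of g expanded in coordinates — holds if and only if (L,u¹,u²,u³) satisfies equations (P) and (U_j). Furthermore, in that case u⁰ satisfies u^α∂_α u⁰ + (c²/(1+c²))Π^{0α}∂_α L = ω(3c²−1)e^{2Ω}δ_{ab}u^a u^b. -/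

import Mathlib

noncomputable section
open MeasureTheory Real Filter Metric

/-- Space = ℝ³ (Euclidean). -/
abbrev Space : Type := EuclideanSpace ℝ (Fin 3)
/-- Spacetime = ℝ × ℝ³, first coordinate is time `t`. -/
abbrev Spacetime : Type := ℝ × Space

/-- spatial coordinate unit vector -/
def e3 (i : Fin 3) : Space := EuclideanSpace.single i (1 : ℝ)

/-- spacetime coordinate directions: `dir4 0` is the time direction. -/
def dir4 : Fin 4 → ℝ × Space := fun μ => Fin.cases ((1 : ℝ), (0 : Space)) (fun i => ((0 : ℝ), e3 i)) μ

/-- spacetime coordinate partial derivative ∂_μ -/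
def pd (μ : Fin 4) (f : Spacetime → ℝ) (p : Spacetime) : ℝ := fderiv ℝ f p (dir4 μ)

/-- ∂_t -/
def pdt (f : Spacetime → ℝ) (p : Spacetime) : ℝ := fderiv ℝ f p ((1 : ℝ), (0 : Space))

/-- spatial partial derivative ∂_i of a spacetime function -/
def pds (i : Fin 3) (f : Spacetime → ℝ) (p : Spacetime) : ℝ := fderiv ℝ f p ((0 : ℝ), e3 i)

/-- spatial partial derivative of a function on space -/
def spd (i : Fin 3) (f : Space → ℝ) (x : Space) : ℝ := fderiv ℝ f x (e3 i)

/-- multi-index spatial derivative ∂_α, α = (α₁,α₂,α₃) -/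
def mpd (α : ℕ × ℕ × ℕ) (f : Space → ℝ) : Space → ℝ :=
  (spd 0)^[α.1] ((spd 1)^[α.2.1] ((spd 2)^[α.2.2] f))

/-- multi-index spatial derivative of a spacetime function -/
def mpdST (α : ℕ × ℕ × ℕ) (f : Spacetime → ℝ) : Spacetime → ℝ :=
  (pds 0)^[α.1] ((pds 1)^[α.2.1] ((pds 2)^[α.2.2] f))

/-- order |α| of a spatial multi-index -/
def mdeg (α : ℕ × ℕ × ℕ) : ℕ := α.1 + α.2.1 + α.2.2

/-- the finite set of spatial multi-indices of order ≤ N -/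
def midxLe (N : ℕ) : Finset (ℕ × ℕ × ℕ) :=
  (Finset.range (N+1) ×ˢ Finset.range (N+1) ×ˢ Finset.range (N+1)).filter (fun α => mdeg α ≤ N)

/-- the finite set of spatial multi-indices of order = N -/
def midxEq (N : ℕ) : Finset (ℕ × ℕ × ℕ) :=
  (Finset.range (N+1) ×ˢ Finset.range (N+1) ×ˢ Finset.range (N+1)).filter (fun α => mdeg α = N)

/-- ‖f‖²_{H^N} = Σ_{|α|≤N} ∫ |∂_α f|² -/
def HNormSq (N : ℕ) (f : Space → ℝ) : ℝ := ∑ α ∈ midxLe N, ∫ x : Space, (mpd α f x)^2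

/-- the Sobolev norm ‖f‖_{H^N} -/
def HNorm (N : ℕ) (f : Space → ℝ) : ℝ := Real.sqrt (HNormSq N f)

/-- membership f ∈ H^N (finiteness of the norm), with classical derivatives -/
def InHN (N : ℕ) (f : Space → ℝ) : Prop := ∀ α ∈ midxLe N, MemLp (mpd α f) 2 volume

/-- the restriction f(t,·) -/
def tslice (f : Spacetime → ℝ) (t : ℝ) : Space → ℝ := fun x => f (t, x)

/-- u⁰ := (1 + e^{2Ω}δ_{ab}u^au^b)^{1/2} -/
def u0 (Ω : ℝ → ℝ) (u : Fin 3 → Spacetime → ℝ) (p : Spacetime) : ℝ :=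
  Real.sqrt (1 + Real.exp (2 * Ω p.1) * ∑ a, (u a p)^2)

/-- the four-velocity (u⁰,u¹,u²,u³) with u⁰ determined by the normalization -/
def Uup (Ω : ℝ → ℝ) (u : Fin 3 → Spacetime → ℝ) : Fin 4 → Spacetime → ℝ :=
  fun μ => Fin.cases (u0 Ω u) u μ

/-- inverse metric (g⁻¹)^{μν}: diag(−1, e^{−2Ω}, e^{−2Ω}, e^{−2Ω}) -/
def ginv (Ω : ℝ → ℝ) (p : Spacetime) (μ ν : Fin 4) : ℝ :=
  if μ = 0 ∧ ν = 0 then -1 else if μ = ν then Real.exp (-(2 * Ω p.1)) else 0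

/-- metric g_{μν} = diag(−1, e^{2Ω}, e^{2Ω}, e^{2Ω}) -/
def gmet (Ω : ℝ → ℝ) (p : Spacetime) (μ ν : Fin 4) : ℝ :=
  if μ = 0 ∧ ν = 0 then -1 else if μ = ν then Real.exp (2 * Ω p.1) else 0

/-- Π^{μν} := u^μ u^ν + (g⁻¹)^{μν} -/
def PiUp (Ω : ℝ → ℝ) (u : Fin 3 → Spacetime → ℝ) (p : Spacetime) (μ ν : Fin 4) : ℝ :=
  Uup Ω u μ p * Uup Ω u ν p + ginv Ω p μ ν

/-- ω := dΩ/dt -/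
def omg (Ω : ℝ → ℝ) (t : ℝ) : ℝ := deriv Ω t

/-- equation (P) at a point -/
def eqnP (Ω : ℝ → ℝ) (c : ℝ) (L : Spacetime → ℝ) (u : Fin 3 → Spacetime → ℝ) (p : Spacetime) :
    Prop :=
  (∑ μ, Uup Ω u μ p * pd μ L p)
      + (1 + c^2) * (∑ a, (Real.exp (2 * Ω p.1) * u a p / u0 Ω u p) * pdt (u a) p)
      + (1 + c^2) * (∑ a, pds a (u a) p)
    = -(omg Ω p.1 * (1 + c^2) * (Real.exp (2 * Ω p.1) * ∑ a, (u a p)^2) / u0 Ω u p)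

/-- equation (U_j) at a point -/
def eqnU (Ω : ℝ → ℝ) (c : ℝ) (L : Spacetime → ℝ) (u : Fin 3 → Spacetime → ℝ) (j : Fin 3)
    (p : Spacetime) : Prop :=
  (∑ μ, Uup Ω u μ p * pd μ (u j) p)
      + (c^2 / (1 + c^2)) * (∑ μ, PiUp Ω u p j.succ μ * pd μ L p)
    = omg Ω p.1 * (3 * c^2 - 2) * u0 Ω u p * u j p

/-- the spacetime slab [1,T) × ℝ³ -/
def slab (T : ℝ) : Set Spacetime := Set.Ico (1 : ℝ) T ×ˢ Set.univ

/-- the modified relativistic Euler system holds pointwise on the slab -/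
def SolutionOn (Ω : ℝ → ℝ) (c : ℝ) (T : ℝ) (L : Spacetime → ℝ)
    (u : Fin 3 → Spacetime → ℝ) : Prop :=
  ∀ p ∈ slab T, eqnP Ω c L u p ∧ ∀ j, eqnU Ω c L u j p

/-- f ∈ C⁰([1,T), H^N) -/
def C0H (N : ℕ) (T : ℝ) (f : Spacetime → ℝ) : Prop :=
  (∀ t ∈ Set.Ico (1 : ℝ) T, InHN N (tslice f t)) ∧
  ∀ t₀ ∈ Set.Ico (1 : ℝ) T, ∀ ε > 0, ∃ δ > 0, ∀ t ∈ Set.Ico (1 : ℝ) T,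
    |t - t₀| < δ → HNorm N (fun x => f (t, x) - f (t₀, x)) < ε

/-- classical solution on [1,T)×ℝ³ with the regularity of the local existence theorem -/
def RegSol (Ω : ℝ → ℝ) (c : ℝ) (N : ℕ) (T : ℝ) (L : Spacetime → ℝ)
    (u : Fin 3 → Spacetime → ℝ) : Prop :=
  (if c^2 = 0 then ContinuousOn L (slab T) else ContDiffOn ℝ 1 L (slab T)) ∧
  (∀ j, ContDiffOn ℝ 1 (u j) (slab T)) ∧
  C0H (if c^2 = 0 then N - 1 else N) T L ∧
  C0H N T (fun p => u0 Ω u p - 1) ∧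
  (∀ j, C0H N T (u j)) ∧
  SolutionOn Ω c T L u

/-- the lower-order velocity norm U_M(t) = e^Ω 𝔇(Ω) (Σ_j ‖u^j‖²_{H^M})^{1/2} -/
def UNorm (Ω 𝔇 : ℝ → ℝ) (M : ℕ) (u : Fin 3 → Spacetime → ℝ) (t : ℝ) : ℝ :=
  Real.exp (Ω t) * 𝔇 (Ω t) * Real.sqrt (∑ j, HNormSq M (tslice (u j) t))

/-- S_{N;velocity} -/
def SvelNorm (Ω : ℝ → ℝ) (N : ℕ) (u : Fin 3 → Spacetime → ℝ) (t : ℝ) : ℝ :=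
  Real.exp (2 * Ω t) * ∑ j, HNorm N (tslice (u j) t)

/-- the solution norm S_N(t), defined casewise in c² -/
def SolNormSp (Ω 𝔇 : ℝ → ℝ) (c : ℝ) (N : ℕ) (Lt : Space → ℝ) (ut : Fin 3 → Space → ℝ)
    (t : ℝ) : ℝ :=
  if c^2 = 0 then HNorm (N-1) Lt + Real.exp (2 * Ω t) * ∑ j, HNorm N (ut j)
  else if c^2 < 1/3 then
    HNorm N Lt + Real.exp (Ω t) * ∑ j, HNorm N (ut j)
      + Real.exp (Ω t) * 𝔇 (Ω t) * Real.sqrt (∑ j, HNormSq (N-1) (ut j))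
  else HNorm N Lt + Real.exp (Ω t) * ∑ j, HNorm N (ut j)

/-- the solution norm S_N(t) of a spacetime solution -/
def SolNorm (Ω 𝔇 : ℝ → ℝ) (c : ℝ) (N : ℕ) (L : Spacetime → ℝ) (u : Fin 3 → Spacetime → ℝ)
    (t : ℝ) : ℝ :=
  SolNormSp Ω 𝔇 c N (tslice L t) (fun j => tslice (u j) t) t

/-- u̇⁰ := (1/u⁰) u_a u̇^a -/
def dotu0 (Ω : ℝ → ℝ) (u : Fin 3 → Spacetime → ℝ) (du : Fin 3 → Spacetime → ℝ)
    (p : Spacetime) : ℝ :=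
  (∑ a, Real.exp (2 * Ω p.1) * u a p * du a p) / u0 Ω u p

/-- the time component J̇⁰ of the energy current, evaluated on a variation (dL, du) -/
def Jdot0 (Ω : ℝ → ℝ) (c : ℝ) (u : Fin 3 → Spacetime → ℝ) (dL : Spacetime → ℝ)
    (du : Fin 3 → Spacetime → ℝ) (p : Spacetime) : ℝ :=
  (c^2 * u0 Ω u p / (1 + c^2)) * (dL p)^2 + 2 * c^2 * dotu0 Ω u du p * dL p
    + (1 + c^2) * u0 Ω u p *
        (-(dotu0 Ω u du p)^2 + Real.exp (2 * Ω p.1) * ∑ a, (du a p)^2)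

/-- E_N²(t) -/
def ENsq (Ω : ℝ → ℝ) (c : ℝ) (N : ℕ) (L : Spacetime → ℝ) (u : Fin 3 → Spacetime → ℝ)
    (t : ℝ) : ℝ :=
  ∑ α ∈ midxLe N, ∫ x : Space, Jdot0 Ω c u (mpdST α L) (fun j => mpdST α (u j)) (t, x)

/-- J̇⁰_{velocity} (case c² = 0) -/
def Jdot0vel (Ω : ℝ → ℝ) (u : Fin 3 → Spacetime → ℝ) (du : Fin 3 → Spacetime → ℝ)
    (p : Spacetime) : ℝ :=
  Real.exp (2 * Ω p.1) * u0 Ω u p *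
    (-(dotu0 Ω u du p)^2 + Real.exp (2 * Ω p.1) * ∑ a, (du a p)^2)

/-- E²_{N;velocity}(t) (case c² = 0) -/
def ENvelSq (Ω : ℝ → ℝ) (N : ℕ) (u : Fin 3 → Spacetime → ℝ) (t : ℝ) : ℝ :=
  ∑ α ∈ midxLe N, ∫ x : Space, Jdot0vel Ω u (fun j => mpdST α (u j)) (t, x)

/-- E²_{M;density}(t) (case c² = 0) -/
def ENdenSq (Ω : ℝ → ℝ) (M : ℕ) (L : Spacetime → ℝ) (u : Fin 3 → Spacetime → ℝ)
    (t : ℝ) : ℝ :=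
  ∑ α ∈ midxLe M, ∫ x : Space, u0 Ω u (t, x) * (mpdST α L (t, x))^2

/-- Hypothesis A1 on the scale factor -/
def HypA1 (Ω : ℝ → ℝ) : Prop :=
  ContDiff ℝ 1 Ω ∧ Ω 1 = 0 ∧ (∀ t ≥ (1:ℝ), 1 ≤ Real.exp (Ω t)) ∧
  MonotoneOn (fun t => Real.exp (Ω t)) (Set.Ici 1) ∧
  Tendsto (fun t => Real.exp (Ω t)) atTop atTop

/-- Hypotheses A2–A3 on the scale factor (casewise in c²) -/
def HypA23 (Ω 𝔇 : ℝ → ℝ) (c : ℝ) : Prop :=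
  (c^2 = 0 → IntegrableOn (fun s => Real.exp (-(2 * Ω s))) (Set.Ici 1)) ∧
  (0 < c^2 ∧ c^2 < 1/3 →
    ContDiff ℝ 1 𝔇 ∧ (∀ x, 0 < 𝔇 x) ∧ MonotoneOn 𝔇 (Set.Ici 1) ∧ Tendsto 𝔇 atTop atTop ∧
    (∃ X : ℝ, ∀ x ≥ X, deriv 𝔇 x / 𝔇 x ≤ 1 - 3 * c^2) ∧
    IntegrableOn (fun x => (𝔇 x)⁻¹) (Set.Ici 1) ∧
    IntegrableOn (fun s => Real.exp (-(Ω s)) * 𝔇 (Ω s)) (Set.Ici 1)) ∧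
  (c^2 = 1/3 → IntegrableOn (fun s => Real.exp (-(Ω s))) (Set.Ici 1))

/-!
Near each point `L = 3(1 + c²)Ω(t) + ln ρ - ln ρ̄`, so `∂_α L = ∂_α ln ρ + 3(1 + c²) ω δ_α⁰`.
Differentiating the normalization `(u⁰)² = 1 + e^{2Ω} |u|²` gives
`u⁰ ∂_α u⁰ = e^{2Ω} (ω δ_α⁰ |u|² + u^a ∂_α u^a)`. Substituting both, each Euler equation becomes
the corresponding equation of the modified system with its right-hand side moved to the left.

For `u⁰`, the same identity contracted with `u^α` expresses `u^α ∂_α u⁰` through `u_a u^α ∂_α u^a`,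
and `u_μ Π^{μα} = 0` gives `u⁰ Π^{0α} = u_a Π^{aα}`; contracting (U_a) with `u_a / u⁰` then yields
the equation for `u⁰`.
-/

open Finset Topology

theorem sqrt_mul_fderiv_sqrt {E : Type*} [NormedAddCommGroup E] [NormedSpace ℝ E] {f : E → ℝ}
    {x : E} (hf : DifferentiableAt ℝ f x) (hx : 0 < f x) (v : E) :
    √(f x) * fderiv ℝ (fun y => √(f y)) x v = fderiv ℝ f x v / 2 := by
  rw [(hf.hasFDerivAt.sqrt hx.ne').fderiv]
  simp only [smul_apply, smul_eq_mul]
  field_simp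

theorem hasFDerivAt_comp_fst {E : Type*} [NormedAddCommGroup E] [NormedSpace ℝ E] {f : ℝ → ℝ}
    {p : ℝ × E} (hf : DifferentiableAt ℝ f p.1) :
    HasFDerivAt (fun q : ℝ × E => f q.1) (deriv f p.1 • ContinuousLinearMap.fst ℝ ℝ E) p :=
  hf.hasDerivAt.comp_hasFDerivAt p hasFDerivAt_fst

theorem dir4_fst (μ : Fin 4) : (dir4 μ).1 = if μ = 0 then 1 else 0 := by
  cases μ using Fin.cases <;> simp [dir4, Fin.succ_ne_zero]

theorem sum_mul_pd_of_pd_eq {L ℓ : Spacetime → ℝ} {p : Spacetime} {k : ℝ}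
    (h : ∀ μ, pd μ L p = pd μ ℓ p + k * (dir4 μ).1) (V : Fin 4 → ℝ) :
    ∑ μ, V μ * pd μ L p = ∑ μ, V μ * pd μ ℓ p + k * V 0 := by
  simp [h, dir4_fst, mul_add, sum_add_distrib, mul_comm]

theorem pd_log_exp_mul_div {Ω : ℝ → ℝ} {ρ : Spacetime → ℝ} {p : Spacetime} (k : ℝ) {ρbar : ℝ}
    (hρbar : ρbar ≠ 0) (hΩ : DifferentiableAt ℝ Ω p.1) (hρ : DifferentiableAt ℝ ρ p)
    (hρp : ρ p ≠ 0) (μ : Fin 4) :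
    pd μ (fun q => log (exp (k * Ω q.1) * ρ q / ρbar)) p
      = pd μ (fun q => log (ρ q)) p + k * deriv Ω p.1 * (dir4 μ).1 := by
  have hev : (fun q => log (exp (k * Ω q.1) * ρ q / ρbar))
      =ᶠ[𝓝 p] fun q => k * Ω q.1 + (log (ρ q) - log ρbar) := by
    filter_upwards [hρ.continuousAt.eventually_ne hρp] with q hq
    rw [log_div (mul_ne_zero (exp_pos _).ne' hq) hρbar, log_mul (exp_pos _).ne' hq, log_exp]
    ring
  have hlog := hρ.hasFDerivAt.log hρp
  rw [pd, hev.fderiv_eq,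
    (((hasFDerivAt_comp_fst hΩ).const_mul k).fun_add (hlog.sub_const _)).fderiv, pd, hlog.fderiv]
  simp only [add_apply, smul_apply, smul_eq_mul, ContinuousLinearMap.coe_fst']
  ring

theorem Uup_zero (Ω : ℝ → ℝ) (u : Fin 3 → Spacetime → ℝ) : Uup Ω u 0 = u0 Ω u := rfl

theorem sq_u0 (Ω : ℝ → ℝ) (u : Fin 3 → Spacetime → ℝ) (p : Spacetime) :
    u0 Ω u p ^ 2 = 1 + exp (2 * Ω p.1) * ∑ a, u a p ^ 2 :=
  sq_sqrt (by positivity)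

theorem u0_pos (Ω : ℝ → ℝ) (u : Fin 3 → Spacetime → ℝ) (p : Spacetime) : 0 < u0 Ω u p :=
  sqrt_pos.mpr (by positivity)

theorem u0_mul_pd_u0 {Ω : ℝ → ℝ} {u : Fin 3 → Spacetime → ℝ} {p : Spacetime}
    (hΩ : DifferentiableAt ℝ Ω p.1) (hu : ∀ a, DifferentiableAt ℝ (u a) p) (μ : Fin 4) :
    u0 Ω u p * pd μ (u0 Ω u) p = exp (2 * Ω p.1) *
      (deriv Ω p.1 * (dir4 μ).1 * ∑ a, u a p ^ 2 + ∑ a, u a p * pd μ (u a) p) := by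
  have hsum : HasFDerivAt (fun q => ∑ a, u a q ^ 2) (∑ a, (2 * u a p) • fderiv ℝ (u a) p) p := by
    refine HasFDerivAt.fun_sum fun a _ => ?_
    simpa using (hu a).hasFDerivAt.pow 2
  have hF := ((((hasFDerivAt_comp_fst hΩ).const_mul 2).exp).fun_mul hsum).const_add 1
  have h := sqrt_mul_fderiv_sqrt hF.differentiableAt (by positivity) (dir4 μ)
  rw [hF.fderiv] at h
  unfold pd u0
  rw [h]
  simp only [Fin.sum_univ_three, smul_add, add_apply, smul_apply, smul_eq_mul,
    ContinuousLinearMap.coe_fst']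
  ring

theorem ginv_succ_succ (Ω : ℝ → ℝ) (p : Spacetime) (a b : Fin 3) :
    ginv Ω p a.succ b.succ = if a = b then exp (-(2 * Ω p.1)) else 0 := by
  simp [ginv, Fin.succ_inj]

theorem PiUp_succ_zero (Ω : ℝ → ℝ) (u : Fin 3 → Spacetime → ℝ) (p : Spacetime) (j : Fin 3) :
    PiUp Ω u p j.succ 0 = u j p * u0 Ω u p := by
  simp [PiUp, ginv, Uup]

-- `u_μ Π^{μν} = 0`, with `u_0 = -u⁰` and `u_a = e^{2Ω} u^a`.
theorem u0_mul_PiUp_zero (Ω : ℝ → ℝ) (u : Fin 3 → Spacetime → ℝ) (p : Spacetime) (ν : Fin 4) :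
    u0 Ω u p * PiUp Ω u p 0 ν = exp (2 * Ω p.1) * ∑ a, u a p * PiUp Ω u p a.succ ν := by
  have hsq := sq_u0 Ω u p
  cases ν using Fin.cases with
  | zero =>
    have hsum : ∑ a, u a p * PiUp Ω u p a.succ 0 = u0 Ω u p * ∑ a, u a p ^ 2 := by
      simp only [PiUp_succ_zero, mul_sum]
      exact sum_congr rfl fun a _ => by ring
    rw [hsum]
    simp only [PiUp, Uup, Fin.cases_zero, ginv, and_self, if_true]
    linear_combination u0 Ω u p * hsq
  | succ b =>
    have hsum : ∑ a, u a p * PiUp Ω u p a.succ b.succ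
        = u b p * ∑ a, u a p ^ 2 + u b p * exp (-(2 * Ω p.1)) := by
      simp only [PiUp, Uup, Fin.cases_succ, ginv_succ_succ, mul_add, mul_ite, mul_zero,
        sum_add_distrib, sum_ite_eq', mem_univ, if_true, mul_sum, add_left_inj]
      exact sum_congr rfl fun a _ => by ring
    have hexp : exp (2 * Ω p.1) * exp (-(2 * Ω p.1)) = 1 := by rw [← exp_add]; simp
    rw [hsum]
    simp only [PiUp, Uup, Fin.cases_zero, Fin.cases_succ, ginv, Fin.succ_ne_zero, and_false,
      (Fin.succ_ne_zero b).symm, if_false, add_zero]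
    linear_combination u b p * hsq - u b p * hexp

-- `u^α D_α ℓ + (1 + c²) D_α u^α = 0`, where `D_α u^α = ∂_α u^α + Γ^α_{α0} u⁰` and `Γ^α_{α0} = 3ω`.
def EulerContinuityEqn (Ω : ℝ → ℝ) (c : ℝ) (ℓ : Spacetime → ℝ) (u : Fin 3 → Spacetime → ℝ)
    (p : Spacetime) : Prop :=
  (∑ μ, Uup Ω u μ p * pd μ ℓ p) + (1 + c^2) * (∑ μ, pd μ (Uup Ω u μ) p)
    + 3 * (1 + c^2) * omg Ω p.1 * u0 Ω u p = 0

-- `u^α D_α u^j + (c²/(1 + c²)) Π^{jα} ∂_α ℓ = 0`, where `Γ^j_{0k} = Γ^j_{k0} = ω δ^j_k` produce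
-- the term `2ω u⁰ u^j`.
def EulerMomentumEqn (Ω : ℝ → ℝ) (c : ℝ) (ℓ : Spacetime → ℝ) (u : Fin 3 → Spacetime → ℝ)
    (j : Fin 3) (p : Spacetime) : Prop :=
  (∑ μ, Uup Ω u μ p * pd μ (u j) p) + 2 * omg Ω p.1 * u0 Ω u p * u j p
    + (c^2 / (1 + c^2)) * (∑ μ, PiUp Ω u p j.succ μ * pd μ ℓ p) = 0

section

variable {Ω : ℝ → ℝ} {c : ℝ} {L ℓ : Spacetime → ℝ} {u : Fin 3 → Spacetime → ℝ} {p : Spacetime}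

theorem eulerContinuityEqn_iff_eqnP (hΩ : DifferentiableAt ℝ Ω p.1)
    (hu : ∀ a, DifferentiableAt ℝ (u a) p)
    (hL : ∀ μ, pd μ L p = pd μ ℓ p + 3 * (1 + c^2) * omg Ω p.1 * (dir4 μ).1) :
    EulerContinuityEqn Ω c ℓ u p ↔ eqnP Ω c L u p := by
  have hdiv : ∑ μ, pd μ (Uup Ω u μ) p = pdt (u0 Ω u) p + ∑ a, pds a (u a) p :=
    Fin.sum_univ_succ _
  have hu0 : u0 Ω u p * pdt (u0 Ω u) p
      = exp (2 * Ω p.1) * (omg Ω p.1 * ∑ a, u a p ^ 2 + ∑ a, u a p * pdt (u a) p) := by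
    have h := u0_mul_pd_u0 hΩ hu 0
    simp only [dir4, Fin.cases_zero, mul_one] at h
    exact h
  have hpos := u0_pos Ω u p
  rw [EulerContinuityEqn, eqnP, sum_mul_pd_of_pd_eq hL, hdiv]
  refine (Iff.of_eq (congrArg (· = 0) ?_)).trans sub_eq_zero
  have hsum : ∑ a, exp (2 * Ω p.1) * u a p / u0 Ω u p * pdt (u a) p
      = exp (2 * Ω p.1) * (∑ a, u a p * pdt (u a) p) / u0 Ω u p := by
    rw [mul_sum, sum_div]
    exact sum_congr rfl fun a _ => by ring
  rw [hsum, Uup_zero]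
  field_simp
  linear_combination (1 + c^2) * hu0

theorem eulerMomentumEqn_iff_eqnU
    (hL : ∀ μ, pd μ L p = pd μ ℓ p + 3 * (1 + c^2) * omg Ω p.1 * (dir4 μ).1) (j : Fin 3) :
    EulerMomentumEqn Ω c ℓ u j p ↔ eqnU Ω c L u j p := by
  rw [EulerMomentumEqn, eqnU, sum_mul_pd_of_pd_eq hL, PiUp_succ_zero]
  refine (Iff.of_eq (congrArg (· = 0) ?_)).trans sub_eq_zero
  field_simp
  ring

theorem u0_eqn_of_eqnU (hΩ : DifferentiableAt ℝ Ω p.1) (hu : ∀ a, DifferentiableAt ℝ (u a) p)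
    (hU : ∀ j, eqnU Ω c L u j p) :
    (∑ μ, Uup Ω u μ p * pd μ (u0 Ω u) p)
        + (c^2 / (1 + c^2)) * (∑ μ, PiUp Ω u p 0 μ * pd μ L p)
      = omg Ω p.1 * (3 * c^2 - 1) * (exp (2 * Ω p.1) * ∑ a, u a p ^ 2) := by
  have hkin : u0 Ω u p * ∑ μ, Uup Ω u μ p * pd μ (u0 Ω u) p
      = exp (2 * Ω p.1) * (omg Ω p.1 * u0 Ω u p * ∑ a, u a p ^ 2
          + ∑ a, u a p * ∑ μ, Uup Ω u μ p * pd μ (u a) p) := by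
    simp_rw [mul_sum, mul_left_comm (u0 Ω u p), u0_mul_pd_u0 hΩ hu]
    simp only [Fin.sum_univ_four, Fin.sum_univ_three, Uup, Fin.cases_zero, dir4_fst, mul_ite,
      ite_mul, mul_one, mul_zero, zero_mul, if_true, one_ne_zero, Fin.reduceEq, if_false, zero_add,
      omg]
    ring
  have htrans : u0 Ω u p * ∑ μ, PiUp Ω u p 0 μ * pd μ L p
      = exp (2 * Ω p.1) * ∑ a, u a p * ∑ μ, PiUp Ω u p a.succ μ * pd μ L p := by
    simp_rw [mul_sum, ← mul_assoc, u0_mul_PiUp_zero]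
    simp only [Fin.sum_univ_four, Fin.sum_univ_three, Fin.succ_zero_eq_one, Fin.succ_one_eq_two,
      Fin.reduceSucc]
    ring
  have hmom : ∀ a, ∑ μ, Uup Ω u μ p * pd μ (u a) p = omg Ω p.1 * (3 * c^2 - 2) * u0 Ω u p * u a p
      - c^2 / (1 + c^2) * ∑ μ, PiUp Ω u p a.succ μ * pd μ L p :=
    fun a => eq_sub_of_add_eq (hU a)
  apply mul_left_cancel₀ (u0_pos Ω u p).ne'
  rw [mul_add, hkin, mul_left_comm, htrans]
  simp_rw [hmom]
  simp only [Fin.sum_univ_three]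
  ring

end

theorem alternative_formulation_of_relativistic_Euler_general
    (Ω : ℝ → ℝ) (hΩ : ContDiff ℝ 1 Ω)
    (c : ℝ)
    (ρbar : ℝ) (hρbar : 0 < ρbar)
    (s : Set Spacetime) (hs : IsOpen s)
    (ρ : Spacetime → ℝ) (u : Fin 3 → Spacetime → ℝ)
    (hρpos : ∀ p ∈ s, 0 < ρ p) (hρ : ContDiffOn ℝ 1 ρ s)
    (hu : ∀ j, ContDiffOn ℝ 1 (u j) s)
    (L : Spacetime → ℝ)
    (hL : L = fun p => Real.log (Real.exp (3 * (1 + c^2) * Ω p.1) * ρ p / ρbar)) :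
    ∀ p ∈ s,
      ((((∑ μ, Uup Ω u μ p * pd μ (fun q => Real.log (ρ q)) p)
            + (1 + c^2) * (∑ μ, pd μ (Uup Ω u μ) p)
            + 3 * (1 + c^2) * omg Ω p.1 * u0 Ω u p = 0)
          ∧ ∀ j : Fin 3,
            (∑ μ, Uup Ω u μ p * pd μ (u j) p) + 2 * omg Ω p.1 * u0 Ω u p * u j p
              + (c^2 / (1 + c^2)) *
                  (∑ μ, PiUp Ω u p j.succ μ * pd μ (fun q => Real.log (ρ q)) p) = 0)
        ↔ (eqnP Ω c L u p ∧ ∀ j, eqnU Ω c L u j p))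
      ∧ ((eqnP Ω c L u p ∧ ∀ j, eqnU Ω c L u j p) →
          (∑ μ, Uup Ω u μ p * pd μ (fun q => u0 Ω u q) p)
              + (c^2 / (1 + c^2)) * (∑ μ, PiUp Ω u p 0 μ * pd μ L p)
            = omg Ω p.1 * (3 * c^2 - 1) * (Real.exp (2 * Ω p.1) * ∑ a, (u a p)^2)) := by
  subst hL
  intro p hp
  have hnhds : s ∈ 𝓝 p := hs.mem_nhds hp
  have hΩp : DifferentiableAt ℝ Ω p.1 := hΩ.differentiable one_ne_zero p.1
  have hup : ∀ a, DifferentiableAt ℝ (u a) p := fun a =>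
    ((hu a).differentiableOn one_ne_zero).differentiableAt hnhds
  have hρp : DifferentiableAt ℝ ρ p := (hρ.differentiableOn one_ne_zero).differentiableAt hnhds
  have hL := pd_log_exp_mul_div (3 * (1 + c^2)) hρbar.ne' hΩp hρp (hρpos p hp).ne'
  exact ⟨and_congr (eulerContinuityEqn_iff_eqnP hΩp hup hL)
      (forall_congr' (eulerMomentumEqn_iff_eqnU hL)),
    fun h => u0_eqn_of_eqnU hΩp hup h.2⟩

/-- Proposition 2.1: equivalence of the coordinate form of the
relativistic Euler equations with the modified system (P), (U_j), and the equation
satisfied by u⁰. -/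
theorem alternative_formulation_of_relativistic_Euler
    (Ω : ℝ → ℝ) (hΩ : ContDiff ℝ 1 Ω) (hΩ1 : Ω 1 = 0)
    (c : ℝ) (hc0 : 0 ≤ c^2) (hc1 : c^2 ≤ 1/3)
    (ρbar : ℝ) (hρbar : 0 < ρbar)
    (s : Set Spacetime) (hs : IsOpen s) (hs1 : ∀ p ∈ s, 1 ≤ p.1)
    (ρ : Spacetime → ℝ) (u : Fin 3 → Spacetime → ℝ)
    (hρpos : ∀ p ∈ s, 0 < ρ p) (hρ : ContDiffOn ℝ 1 ρ s)
    (hu : ∀ j, ContDiffOn ℝ 1 (u j) s)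
    (L : Spacetime → ℝ)
    (hL : L = fun p => Real.log (Real.exp (3 * (1 + c^2) * Ω p.1) * ρ p / ρbar)) :
    ∀ p ∈ s,
      ((((∑ μ, Uup Ω u μ p * pd μ (fun q => Real.log (ρ q)) p)
            + (1 + c^2) * (∑ μ, pd μ (Uup Ω u μ) p)
            + 3 * (1 + c^2) * omg Ω p.1 * u0 Ω u p = 0)
          ∧ ∀ j : Fin 3,
            (∑ μ, Uup Ω u μ p * pd μ (u j) p) + 2 * omg Ω p.1 * u0 Ω u p * u j p
              + (c^2 / (1 + c^2)) *
                  (∑ μ, PiUp Ω u p j.succ μ * pd μ (fun q => Real.log (ρ q)) p) = 0)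
        ↔ (eqnP Ω c L u p ∧ ∀ j, eqnU Ω c L u j p))
      ∧ ((eqnP Ω c L u p ∧ ∀ j, eqnU Ω c L u j p) →
          (∑ μ, Uup Ω u μ p * pd μ (fun q => u0 Ω u q) p)
              + (c^2 / (1 + c^2)) * (∑ μ, PiUp Ω u p 0 μ * pd μ L p)
            = omg Ω p.1 * (3 * c^2 - 1) * (Real.exp (2 * Ω p.1) * ∑ a, (u a p)^2)) :=
  alternative_formulation_of_relativistic_Euler_general Ω hΩ c ρbar hρbar s hs ρ u hρpos hρ hu L hL
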